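/- arXiv:1708.00547 — 6 statements merged into one kernel-verified Lean document; each statement's English description precedes it below -/
import Mathlib

section
/- The function c(k) = sqrt(tanh(k)/k) is strictly decreasing on (0, ∞). -/
noncomputable def cww (k : ℝ) : ℝ := Real.sqrt (Real.tanh k / k)

theorem cww_strictAntiOn : StrictAntiOn cww (Set.Ioi (0 : ℝ)) := by
  have key : StrictAntiOn (fun x : ℝ => Real.sinh x / (x * Real.cosh x)) (Set.Ioi 0) := by
    apply strictAntiOn_of_deriv_neg (convex_Ioi 0)
    · apply ContinuousOn.div Real.continuous_sinh.continuousOn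
        (continuous_id.mul Real.continuous_cosh).continuousOn
      intro x hx
      exact mul_ne_zero (ne_of_gt hx) (ne_of_gt (Real.cosh_pos x))
    · intro x hx
      rw [interior_Ioi, Set.mem_Ioi] at hx
      have hne : x * Real.cosh x ≠ 0 :=
        mul_ne_zero (ne_of_gt hx) (ne_of_gt (Real.cosh_pos x))
      have hd : HasDerivAt (fun x : ℝ => Real.sinh x / (x * Real.cosh x))
          ((Real.cosh x * (x * Real.cosh x) -
            Real.sinh x * (1 * Real.cosh x + x * Real.sinh x)) / (x * Real.cosh x) ^ 2) x :=
        (Real.hasDerivAt_sinh x).div ((hasDerivAt_id x).mul (Real.hasDerivAt_cosh x)) hne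
      rw [hd.deriv]
      apply div_neg_of_neg_of_pos
      · nlinarith [Real.self_lt_sinh_iff.2 hx, (Real.one_lt_cosh (x := x)).2 (ne_of_gt hx),
          Real.cosh_sq_sub_sinh_sq x, Real.sinh_pos_iff.2 hx]
      · positivity
  intro x hx y hy hxy
  have hx0 : (0:ℝ) < x := hx
  have hy0 : (0:ℝ) < y := hy
  have hrw : ∀ z : ℝ, Real.tanh z / z = Real.sinh z / (z * Real.cosh z) := by
    intro z
    rw [Real.tanh_eq_sinh_div_cosh, div_div, mul_comm]
  unfold cww
  rw [hrw, hrw]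
  apply Real.sqrt_lt_sqrt
  · positivity
  · exact key hx hy hxy
end

section
/- For all k > 0, the group velocity (k·c(k))' of the gravity wave dispersion satisfies 0 < (k·c(k))' < 1, where c(k) = sqrt(tanh(k)/k). Consequently i₂(k) := ((k·c(k))')² − 1 < 0 for all k > 0. -/
/-- Group velocity of gravity waves. -/
noncomputable def groupVel (k : ℝ) : ℝ := deriv (fun k => k * cww k) k

open Real

/-- `sinh x < x * cosh x` for `x > 0`. -/
lemma sinh_lt_mul_cosh {x : ℝ} (hx : 0 < x) : Real.sinh x < x * Real.cosh x := by
  have h : StrictMonoOn (fun y : ℝ => y * Real.cosh y - Real.sinh y) (Set.Ici 0) := by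
    apply strictMonoOn_of_deriv_pos (convex_Ici _)
    · exact ((continuous_id.mul Real.continuous_cosh).sub Real.continuous_sinh).continuousOn
    · intro y hy
      rw [interior_Ici, Set.mem_Ioi] at hy
      have h1 : HasDerivAt (fun y : ℝ => y * Real.cosh y - Real.sinh y)
          (1 * Real.cosh y + y * Real.sinh y - Real.cosh y) y :=
        ((hasDerivAt_id y).mul (Real.hasDerivAt_cosh y)).sub (Real.hasDerivAt_sinh y)
      rw [h1.deriv]
      have := Real.sinh_pos_iff.mpr hy
      nlinarith
  have := h (Set.self_mem_Ici) (Set.mem_Ici.mpr hx.le) hx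
  simp at this
  linarith

/-- `x < sinh x * cosh x` for `x > 0`. -/
lemma lt_sinh_mul_cosh {x : ℝ} (hx : 0 < x) : x < Real.sinh x * Real.cosh x := by
  have h := Real.self_lt_sinh_iff.mpr (by linarith : (0:ℝ) < 2 * x)
  rw [Real.sinh_two_mul] at h
  linarith

lemma groupVel_eq {k : ℝ} (hk : 0 < k) :
    groupVel k = (Real.sinh k * Real.cosh k + k) /
      (Real.cosh k ^ 2 * (2 * Real.sqrt (k * Real.sinh k / Real.cosh k))) := by
  have hc := Real.cosh_pos k
  have hs := Real.sinh_pos_iff.mpr hk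
  have hpos : 0 < k * Real.sinh k / Real.cosh k := by positivity
  -- the function equals sqrt (x * sinh x / cosh x) near k
  have hev : (fun x : ℝ => x * cww x) =ᶠ[nhds k]
      (fun x : ℝ => Real.sqrt (x * Real.sinh x / Real.cosh x)) := by
    filter_upwards [eventually_gt_nhds hk] with x hx
    have hcx := Real.cosh_pos x
    simp only [cww]
    rw [show x * Real.sqrt (Real.tanh x / x) = Real.sqrt (x ^ 2 * (Real.tanh x / x)) by
      rw [Real.sqrt_mul (by positivity), Real.sqrt_sq hx.le]]
    rw [Real.tanh_eq_sinh_div_cosh]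
    congr 1
    field_simp
  have hh : HasDerivAt (fun x : ℝ => x * Real.sinh x / Real.cosh x)
      (((1 * Real.sinh k + k * Real.cosh k) * Real.cosh k -
        k * Real.sinh k * Real.sinh k) / Real.cosh k ^ 2) k :=
    ((hasDerivAt_id k).mul (Real.hasDerivAt_sinh k)).div (Real.hasDerivAt_cosh k) hc.ne'
  have hsq : HasDerivAt (fun x : ℝ => Real.sqrt (x * Real.sinh x / Real.cosh x))
      ((((1 * Real.sinh k + k * Real.cosh k) * Real.cosh k -
        k * Real.sinh k * Real.sinh k) / Real.cosh k ^ 2) /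
        (2 * Real.sqrt (k * Real.sinh k / Real.cosh k))) k :=
    hh.sqrt hpos.ne'
  have hd : groupVel k = _ := (Filter.EventuallyEq.deriv_eq hev).trans hsq.deriv
  rw [hd]
  have hident : (1 * Real.sinh k + k * Real.cosh k) * Real.cosh k -
      k * Real.sinh k * Real.sinh k = Real.sinh k * Real.cosh k + k := by
    have := Real.cosh_sq_sub_sinh_sq k
    nlinarith
  rw [hident]
  have hsqrt : (0:ℝ) < Real.sqrt (k * Real.sinh k / Real.cosh k) := Real.sqrt_pos.mpr hpos
  field_simp

theorem i2_neg : ∀ k : ℝ, 0 < k →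
    (0 < groupVel k ∧ groupVel k < 1) ∧ (groupVel k) ^ 2 - 1 < 0 := by
  intro k hk
  have hc := Real.cosh_pos k
  have hs := Real.sinh_pos_iff.mpr hk
  have hpos : 0 < k * Real.sinh k / Real.cosh k := by positivity
  have hsqrt : (0:ℝ) < Real.sqrt (k * Real.sinh k / Real.cosh k) := Real.sqrt_pos.mpr hpos
  rw [groupVel_eq hk]
  set r := Real.sqrt (k * Real.sinh k / Real.cosh k) with hr
  have hrsq : r ^ 2 = k * Real.sinh k / Real.cosh k := Real.sq_sqrt hpos.le
  have hnum : 0 < Real.sinh k * Real.cosh k + k := by positivity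
  have hden : 0 < Real.cosh k ^ 2 * (2 * r) := by positivity
  have hgv0 : 0 < (Real.sinh k * Real.cosh k + k) / (Real.cosh k ^ 2 * (2 * r)) :=
    div_pos hnum hden
  -- upper bound: sinh*cosh + k < 2*sinh*cosh ≤ cosh^2 * 2r
  have h1 : k < Real.sinh k * Real.cosh k := lt_sinh_mul_cosh hk
  have h2 : Real.sinh k < k * Real.cosh k := sinh_lt_mul_cosh hk
  -- sinh k ≤ cosh k * r  ⟺  sinh² ≤ cosh² * r² = cosh * k * sinh ⟺ sinh ≤ k cosh
  have hrsq' : Real.cosh k * r ^ 2 = k * Real.sinh k := by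
    rw [hrsq]; field_simp
  have h3 : Real.sinh k < Real.cosh k * r := by
    nlinarith [hrsq', h2, hs, hc, hsqrt]
  have hlt : (Real.sinh k * Real.cosh k + k) / (Real.cosh k ^ 2 * (2 * r)) < 1 := by
    rw [div_lt_one hden]
    nlinarith
  refine ⟨⟨hgv0, hlt⟩, ?_⟩
  nlinarith
end

section
/- For all k > 0, the second derivative (k·c(k))'' of the gravity wave dispersion is strictly negative, where c(k) = sqrt(tanh(k)/k). That is, the group velocity is strictly decreasing, so i₁(k) := (k·c(k))'' < 0 for all k > 0. -/
/-!
On `k > 0` we have `k c(k) = √g` with `g k = k tanh k`, and for any positive `g`,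
`(√g)'' = (2 g g'' - g'²) / (4 g^{3/2})`. With `t = tanh k` and `s = 1 - t² = sech² k` one has
`g' = t + k s` and `g'' = 2 s (1 - k t)`, so `2 g g'' - g'² = -(t - k s)² - 4 k² t² s < 0`.
-/

open Real Filter Topology Set

theorem Real.hasDerivAt_tanh (x : ℝ) : HasDerivAt tanh (1 - tanh x ^ 2) x := by
  have hcosh := cosh_pos x
  rw [show tanh = sinh / cosh from funext tanh_eq_sinh_div_cosh]
  refine ((hasDerivAt_sinh x).div (hasDerivAt_cosh x) hcosh.ne').congr_deriv ?_
  simp only [Pi.div_apply]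
  field_simp

theorem Real.tanh_pos {x : ℝ} (hx : 0 < x) : 0 < tanh x := by
  rw [tanh_eq_sinh_div_cosh]
  exact div_pos (sinh_pos_iff.mpr hx) (cosh_pos x)

theorem hasDerivAt_deriv_sqrt {g g' : ℝ → ℝ} {g'' x : ℝ} (hx : 0 < g x)
    (hg : ∀ᶠ y in 𝓝 x, HasDerivAt g (g' y) y) (hg' : HasDerivAt g' g'' x) :
    HasDerivAt (deriv fun y => √(g y)) ((2 * g x * g'' - g' x ^ 2) / (4 * g x * √(g x))) x := by
  have hpos : ∀ᶠ y in 𝓝 x, 0 < g y := hg.self_of_nhds.continuousAt.eventually (lt_mem_nhds hx)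
  have hderiv : deriv (fun y => √(g y)) =ᶠ[𝓝 x] fun y => g' y / (2 * √(g y)) := by
    filter_upwards [hg, hpos] with y hy hy0
    exact (hy.sqrt hy0.ne').deriv
  have hsqrt : 0 < √(g x) := sqrt_pos.mpr hx
  refine HasDerivAt.congr_of_eventuallyEq ?_ hderiv
  refine (hg'.div ((hg.self_of_nhds.sqrt hx.ne').const_mul 2) (by positivity)).congr_deriv ?_
  field_simp
  rw [sq_sqrt hx.le]
  ring

theorem hasDerivAt_mul_tanh (x : ℝ) :
    HasDerivAt (fun k => k * tanh k) (tanh x + x * (1 - tanh x ^ 2)) x :=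
  ((hasDerivAt_id' x).mul (hasDerivAt_tanh x)).congr_deriv (by ring)

theorem hasDerivAt_tanh_add_mul_sech_sq (x : ℝ) :
    HasDerivAt (fun k => tanh k + k * (1 - tanh k ^ 2))
      (2 * (1 - tanh x ^ 2) * (1 - x * tanh x)) x := by
  have hsech := ((hasDerivAt_tanh x).pow 2).const_sub 1
  refine ((hasDerivAt_tanh x).add ((hasDerivAt_id' x).mul hsech)).congr_deriv ?_
  simp only [Pi.pow_apply]
  ring

theorem two_mul_mul_tanh_mul_lt_sq {k : ℝ} (hk : 0 < k) :
    2 * (k * tanh k) * (2 * (1 - tanh k ^ 2) * (1 - k * tanh k))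
      < (tanh k + k * (1 - tanh k ^ 2)) ^ 2 := by
  have hsech : 0 < 1 - tanh k ^ 2 := sub_pos.mpr (tanh_sq_lt_one k)
  have hkt : 0 < k * tanh k := mul_pos hk (tanh_pos hk)
  nlinarith [sq_nonneg (tanh k - k * (1 - tanh k ^ 2)), mul_pos (mul_pos hkt hkt) hsech]

theorem mul_cww_eqOn : EqOn (fun k => k * cww k) (fun k => √(k * tanh k)) (Ioi 0) := by
  intro k (hk : 0 < k)
  simp only [cww]
  rw [show k * tanh k = k ^ 2 * (tanh k / k) by field_simp, sqrt_mul (sq_nonneg k),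
    sqrt_sq hk.le]

theorem i1_neg : ∀ k : ℝ, 0 < k →
    deriv (deriv (fun k => k * cww k)) k < 0 := by
  intro k hk
  have hF : deriv (fun x => x * cww x) =ᶠ[𝓝 k] deriv fun x => √(x * tanh x) :=
    (eventuallyEq_of_mem (isOpen_Ioi.mem_nhds hk) mul_cww_eqOn).deriv
  have hkt : 0 < k * tanh k := mul_pos hk (tanh_pos hk)
  rw [hF.deriv_eq, (hasDerivAt_deriv_sqrt (g := fun x => x * tanh x) hkt
    (Eventually.of_forall hasDerivAt_mul_tanh) (hasDerivAt_tanh_add_mul_sech_sq k)).deriv]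
  exact div_neg_of_neg_of_pos (sub_neg.mpr (two_mul_mul_tanh_mul_lt_sq hk)) (by positivity)
end

section
/- For T ≥ 1/3, the function c(k) = sqrt((1 + T k²)·tanh(k)/k) is strictly increasing on (0, ∞). -/
noncomputable def cT (T k : ℝ) : ℝ := Real.sqrt ((1 + T * k ^ 2) * Real.tanh k / k)

/-!
`c(k)² = (1 + T k²) tanh k / k` has derivative `N / (k cosh k)²` with
`N = (T k² - 1) sinh k cosh k + (1 + T k²) k`. The coefficient `k² (sinh k cosh k + k)` of `T`
in `N` is positive, so it suffices to treat `T = 1/3`; there, with `x = 2k`,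
`24 N = (x² - 12) sinh x + x³ + 12 x`. This function and its first three derivatives vanish at
`0`, and its fourth derivative `x² sinh x + 8 x cosh x` is positive on `(0, ∞)`.
-/

open Real Set

lemma pos_of_hasDerivAt_of_deriv_pos {F F' : ℝ → ℝ} (hF : ∀ x, HasDerivAt F (F' x) x)
    (h0 : F 0 = 0) (hF' : ∀ x, 0 < x → 0 < F' x) : ∀ x, 0 < x → 0 < F x := by
  have hmono : StrictMonoOn F (Ici 0) :=
    strictMonoOn_of_hasDerivWithinAt_pos (convex_Ici 0)
      (fun y _ => (hF y).continuousAt.continuousWithinAt)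
      (fun y _ => (hF y).hasDerivWithinAt) (by rwa [interior_Ici])
  intro x hx
  simpa [h0] using hmono self_mem_Ici hx.le hx

lemma sq_sub_six_mul_cosh_add_pos {x : ℝ} (hx : 0 < x) :
    0 < 6 * x * sinh x + (x ^ 2 - 6) * cosh x + 6 := by
  revert x
  apply pos_of_hasDerivAt_of_deriv_pos (F' := fun x => x ^ 2 * sinh x + 8 * x * cosh x)
  · intro x
    have h := (((hasDerivAt_id' x).const_mul 6).mul (hasDerivAt_sinh x)).add
      (((hasDerivAt_pow 2 x).sub_const 6).mul (hasDerivAt_cosh x)) |>.add_const 6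
    refine h.congr_deriv ?_
    ring
  · simp
  · intro x hx
    have := sinh_pos_iff.mpr hx
    positivity

lemma sq_sub_ten_mul_sinh_add_pos {x : ℝ} (hx : 0 < x) :
    0 < (x ^ 2 - 10) * sinh x + 4 * x * cosh x + 6 * x := by
  revert x
  apply pos_of_hasDerivAt_of_deriv_pos
    (F' := fun x => 6 * x * sinh x + (x ^ 2 - 6) * cosh x + 6)
    ?_ (by simp) fun _ => sq_sub_six_mul_cosh_add_pos
  intro x
  have h := (((hasDerivAt_pow 2 x).sub_const 10).mul (hasDerivAt_sinh x)).add
    (((hasDerivAt_id' x).const_mul 4).mul (hasDerivAt_cosh x)) |>.add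
    ((hasDerivAt_id' x).const_mul 6)
  refine h.congr_deriv ?_
  push_cast
  ring

lemma sq_sub_twelve_mul_cosh_add_pos {x : ℝ} (hx : 0 < x) :
    0 < 2 * x * sinh x + (x ^ 2 - 12) * cosh x + 3 * x ^ 2 + 12 := by
  revert x
  apply pos_of_hasDerivAt_of_deriv_pos
    (F' := fun x => (x ^ 2 - 10) * sinh x + 4 * x * cosh x + 6 * x)
    ?_ (by simp) fun _ => sq_sub_ten_mul_sinh_add_pos
  intro x
  have h := (((hasDerivAt_id' x).const_mul 2).mul (hasDerivAt_sinh x)).add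
    (((hasDerivAt_pow 2 x).sub_const 12).mul (hasDerivAt_cosh x)) |>.add
    ((hasDerivAt_pow 2 x).const_mul 3) |>.add_const 12
  refine h.congr_deriv ?_
  push_cast
  ring

lemma sq_sub_twelve_mul_sinh_add_pos {x : ℝ} (hx : 0 < x) :
    0 < (x ^ 2 - 12) * sinh x + x ^ 3 + 12 * x := by
  revert x
  apply pos_of_hasDerivAt_of_deriv_pos
    (F' := fun x => 2 * x * sinh x + (x ^ 2 - 12) * cosh x + 3 * x ^ 2 + 12)
    ?_ (by simp) fun _ => sq_sub_twelve_mul_cosh_add_pos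
  intro x
  have h := (((hasDerivAt_pow 2 x).sub_const 12).mul (hasDerivAt_sinh x)).add
    (hasDerivAt_pow 3 x) |>.add ((hasDerivAt_id' x).const_mul 12)
  refine h.congr_deriv ?_
  push_cast
  ring

lemma dispersion_numerator_pos {T k : ℝ} (hT : 1 / 3 ≤ T) (hk : 0 < k) :
    0 < (T * k ^ 2 - 1) * (sinh k * cosh k) + (1 + T * k ^ 2) * k := by
  have h_third : 0 < (k ^ 2 / 3 - 1) * (sinh k * cosh k) + (1 + k ^ 2 / 3) * k := by
    have h := sq_sub_twelve_mul_sinh_add_pos (mul_pos two_pos hk)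
    rw [sinh_two_mul] at h
    linarith
  have h_excess : 0 ≤ (T - 1 / 3) * (k ^ 2 * (sinh k * cosh k + k)) := by
    have := sinh_pos_iff.mpr hk
    have := cosh_pos k
    exact mul_nonneg (by linarith) (by positivity)
  linarith

noncomputable def cTSq (T k : ℝ) : ℝ := (1 + T * k ^ 2) * tanh k / k

lemma hasDerivAt_cTSq (T : ℝ) {k : ℝ} (hk : k ≠ 0) :
    HasDerivAt (cTSq T)
      (((T * k ^ 2 - 1) * (sinh k * cosh k) + (1 + T * k ^ 2) * k) / (cosh k * k) ^ 2) k := by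
  have hcT : cTSq T = fun k => (1 + T * k ^ 2) * sinh k / (cosh k * k) := by
    funext x
    rw [cTSq, tanh_eq_sinh_div_cosh, mul_div_assoc', div_div]
  have hc : cosh k * k ≠ 0 := mul_ne_zero (cosh_pos k).ne' hk
  rw [hcT]
  have h := (((hasDerivAt_pow 2 k).const_mul T).const_add 1).mul (hasDerivAt_sinh k) |>.div
    ((hasDerivAt_cosh k).mul (hasDerivAt_id' k)) hc
  refine h.congr_deriv ?_
  simp only [Pi.mul_apply]
  rw [div_eq_div_iff (pow_ne_zero 2 hc) (pow_ne_zero 2 hc)]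
  push_cast
  linear_combination ((1 + T * k ^ 2) * k * (cosh k * k) ^ 2) * cosh_sq_sub_sinh_sq k

lemma strictMonoOn_cTSq {T : ℝ} (hT : 1 / 3 ≤ T) : StrictMonoOn (cTSq T) (Ioi 0) := by
  refine strictMonoOn_of_hasDerivWithinAt_pos (convex_Ioi 0)
    (fun k hk => (hasDerivAt_cTSq T (ne_of_gt hk)).continuousAt.continuousWithinAt)
    (fun k hk => (hasDerivAt_cTSq T (ne_of_gt (interior_subset hk))).hasDerivWithinAt)
    (fun k hk => ?_)
  rw [interior_Ioi] at hk
  exact div_pos (dispersion_numerator_pos hT hk) (pow_pos (mul_pos (cosh_pos k) hk) 2)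

lemma cTSq_pos {T k : ℝ} (hT : 0 ≤ T) (hk : 0 < k) : 0 < cTSq T k := by
  have : 0 < tanh k := by
    rw [tanh_eq_sinh_div_cosh]
    exact div_pos (sinh_pos_iff.mpr hk) (cosh_pos k)
  unfold cTSq
  positivity

theorem cT_strictMonoOn_of_large_tension :
    ∀ T : ℝ, 1 / 3 ≤ T → StrictMonoOn (cT T) (Set.Ioi (0 : ℝ)) := by
  intro T hT
  exact strictMonoOn_sqrt.comp (strictMonoOn_cTSq hT)
    fun k hk => (cTSq_pos (by linarith) hk).le
end

section
/- For T > 1/3 and for all k > 0, c(2k) > c(k) where c(k) = sqrt((1 + T k²)·tanh(k)/k); hence the factor i₃(k) = c(k)² − c(2k)² is strictly negative, so there is no second-harmonic resonance. -/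
open Real Set

theorem apply_zero_le_of_hasDerivAt_nonneg {f f' : ℝ → ℝ}
    (hf : ∀ y, 0 ≤ y → HasDerivAt f (f' y) y) (hf' : ∀ y, 0 ≤ y → 0 ≤ f' y) {x : ℝ}
    (hx : 0 ≤ x) : f 0 ≤ f x := by
  have hmono : MonotoneOn f (Ici 0) := by
    refine monotoneOn_of_hasDerivWithinAt_nonneg (f' := f') (convex_Ici 0)
      (fun y hy ↦ (hf y hy).continuousAt.continuousWithinAt) (fun y hy ↦ ?_) (fun y hy ↦ ?_)
    all_goals rw [interior_Ici] at hy
    · exact (hf y (le_of_lt hy)).hasDerivWithinAt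
    · exact hf' y (le_of_lt hy)
  exact hmono self_mem_Ici hx hx

theorem cosh_sub_one_mul_six_sub_sq_le (x : ℝ) : (cosh x - 1) * (6 - x ^ 2) ≤ 3 * x ^ 2 := by
  suffices h : ∀ y, 0 ≤ y → (cosh y - 1) * (6 - y ^ 2) ≤ 3 * y ^ 2 by
    simpa only [cosh_abs, sq_abs] using h |x| (abs_nonneg x)
  have hderiv₂ : ∀ y, 0 ≤ y → 0 ≤ 4 - 4 * cosh y + 4 * y * sinh y + y ^ 2 * cosh y := by
    intro y hy
    have := apply_zero_le_of_hasDerivAt_nonneg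
      (f := fun y ↦ 4 - 4 * cosh y + 4 * y * sinh y + y ^ 2 * cosh y)
      (f' := fun y ↦ 6 * y * cosh y + y ^ 2 * sinh y) (fun y _ ↦ ?_)
      (fun y hy ↦ by have := sinh_nonneg_iff.mpr hy; positivity) hy
    · simpa using this
    · refine ((((hasDerivAt_cosh y).const_mul 4).const_sub 4).add
        (((hasDerivAt_id' y).const_mul 4).mul (hasDerivAt_sinh y)) |>.add
        ((hasDerivAt_pow 2 y).mul (hasDerivAt_cosh y))).congr_deriv ?_
      ring
  have hderiv₁ : ∀ y, 0 ≤ y → 0 ≤ 4 * y + 2 * y * cosh y - (6 - y ^ 2) * sinh y := by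
    intro y hy
    have := apply_zero_le_of_hasDerivAt_nonneg
      (f := fun y ↦ 4 * y + 2 * y * cosh y - (6 - y ^ 2) * sinh y)
      (fun y _ ↦ ?_) hderiv₂ hy
    · simpa using this
    · refine ((((hasDerivAt_id' y).const_mul 4).add
        (((hasDerivAt_id' y).const_mul 2).mul (hasDerivAt_cosh y))).sub
        (((hasDerivAt_pow 2 y).const_sub 6).mul (hasDerivAt_sinh y))).congr_deriv ?_
      ring
  intro y hy
  have := apply_zero_le_of_hasDerivAt_nonneg (f := fun y ↦ 3 * y ^ 2 - (cosh y - 1) * (6 - y ^ 2))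
    (fun y _ ↦ ?_) hderiv₁ hy
  · simpa using this
  · refine (((hasDerivAt_pow 2 y).const_mul 3).sub
      (((hasDerivAt_cosh y).sub_const 1).mul ((hasDerivAt_pow 2 y).const_sub 6))).congr_deriv ?_
    ring

theorem three_mul_sinh_sq_le (x : ℝ) : 3 * sinh x ^ 2 ≤ x ^ 2 * (3 + 2 * sinh x ^ 2) := by
  have h := cosh_sub_one_mul_six_sub_sq_le (2 * x)
  rw [cosh_two_mul, cosh_sq] at h
  nlinarith

theorem tanh_div_lt_of_one_third_lt {T k : ℝ} (hT : 1 / 3 < T) (hk : 0 < k) :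
    (1 + T * k ^ 2) * tanh k / k < (1 + T * (2 * k) ^ 2) * tanh (2 * k) / (2 * k) := by
  have hs : 0 < sinh k := sinh_pos_iff.mpr hk
  have hgap : sinh k ^ 2 < T * k ^ 2 * (3 + 2 * sinh k ^ 2) := by
    have : 0 < k ^ 2 * (3 + 2 * sinh k ^ 2) := by positivity
    nlinarith [three_mul_sinh_sq_le k]
  have hdiff : (1 + T * (2 * k) ^ 2) * tanh (2 * k) / (2 * k) - (1 + T * k ^ 2) * tanh k / k
      = sinh k * (T * k ^ 2 * (3 + 2 * sinh k ^ 2) - sinh k ^ 2)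
        / (k * cosh k * (cosh k ^ 2 + sinh k ^ 2)) := by
    rw [tanh_eq_sinh_div_cosh, tanh_eq_sinh_div_cosh, sinh_two_mul, cosh_two_mul]
    field_simp
    linear_combination 3 * T * k ^ 2 * cosh_sq k
  rw [← sub_pos, hdiff]
  have := sub_pos.mpr hgap
  positivity

theorem i3_neg_of_large_tension : ∀ T : ℝ, 1 / 3 < T → ∀ k : ℝ, 0 < k →
    cT T k < cT T (2 * k) ∧ cT T k ^ 2 - cT T (2 * k) ^ 2 < 0 := by
  intro T hT k hk
  have hnonneg : 0 ≤ (1 + T * k ^ 2) * tanh k / k := by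
    have : 0 < T := by linarith
    have := sinh_pos_iff.mpr hk
    rw [tanh_eq_sinh_div_cosh]
    positivity
  have hlt : cT T k < cT T (2 * k) := sqrt_lt_sqrt hnonneg (tanh_div_lt_of_one_third_lt hT hk)
  exact ⟨hlt, sub_neg.mpr (pow_lt_pow_left₀ hlt (sqrt_nonneg _) two_ne_zero)⟩
end

section
/- For 0 < T < 1/3, there exists k > 0 such that c(k) = c(2k), i.e., the second-harmonic resonance condition i₃(k) = 0 has a solution, where c(k) = sqrt((1 + T k²)·tanh(k)/k). -/
open Filter Set Topology

namespace Real

@[fun_prop]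
theorem continuous_tanh : Continuous tanh :=
  (continuous_sinh.div continuous_cosh fun x => (cosh_pos x).ne').congr
    fun x => (tanh_eq_sinh_div_cosh x).symm

theorem tanh_two_mul (x : ℝ) : tanh (2 * x) = 2 * tanh x / (1 + tanh x ^ 2) := by
  have hc := (cosh_pos x).ne'
  rw [tanh_eq_sinh_div_cosh, tanh_eq_sinh_div_cosh, sinh_two_mul, cosh_two_mul]
  field_simp

theorem tendsto_tanh_div_self : Tendsto (fun x => tanh x / x) (𝓝[≠] 0) (𝓝 1) := by
  have hsinh : Tendsto (fun x => x⁻¹ * sinh x) (𝓝[≠] 0) (𝓝 1) := by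
    simpa using (hasDerivAt_sinh 0).tendsto_slope_zero
  have hcosh : Tendsto cosh (𝓝[≠] 0) (𝓝 1) := by
    simpa using continuous_cosh.continuousAt.tendsto.mono_left (nhdsWithin_le_nhds (a := 0))
  have hquot := hsinh.div hcosh one_ne_zero
  rw [div_one] at hquot
  refine hquot.congr fun x => ?_
  simp only [Pi.div_apply, tanh_eq_sinh_div_cosh]
  ring

end Real

open Real

noncomputable def phaseSpeedSq (T k : ℝ) : ℝ := (1 + T * k ^ 2) * tanh k / k

noncomputable def resonanceDefect (T k : ℝ) : ℝ := 3 * T * k ^ 2 - (1 + T * k ^ 2) * tanh k ^ 2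

theorem phaseSpeedSq_two_mul_sub (T k : ℝ) :
    phaseSpeedSq T (2 * k) - phaseSpeedSq T k =
      tanh k / (k * (1 + tanh k ^ 2)) * resonanceDefect T k := by
  rcases eq_or_ne k 0 with rfl | hk
  · simp [phaseSpeedSq]
  · have ht : 1 + tanh k ^ 2 ≠ 0 := by positivity
    rw [phaseSpeedSq, phaseSpeedSq, resonanceDefect, tanh_two_mul]
    field_simp
    ring

theorem continuous_resonanceDefect (T : ℝ) : Continuous (resonanceDefect T) := by
  unfold resonanceDefect
  fun_prop

theorem resonanceDefect_pos {T k : ℝ} (h : 1 ≤ 2 * T * k ^ 2) : 0 < resonanceDefect T k := by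
  have ht : tanh k ^ 2 < 1 := tanh_sq_lt_one k
  have hpos : 0 < 1 + T * k ^ 2 := by linarith
  unfold resonanceDefect
  nlinarith [mul_lt_mul_of_pos_left ht hpos]

theorem eventually_resonanceDefect_neg {T : ℝ} (hT : T < 1 / 3) :
    ∀ᶠ k in 𝓝[>] 0, resonanceDefect T k < 0 := by
  have hlim : Tendsto (fun k => (1 + T * k ^ 2) * (tanh k / k) ^ 2) (𝓝[≠] 0) (𝓝 1) := by
    have hpoly : Tendsto (fun k : ℝ => 1 + T * k ^ 2) (𝓝[≠] 0) (𝓝 1) :=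
      ((by fun_prop : Continuous fun k : ℝ => 1 + T * k ^ 2).tendsto' 0 1 (by simp)).mono_left
        nhdsWithin_le_nhds
    simpa using hpoly.mul (tendsto_tanh_div_self.pow 2)
  have hgt : ∀ᶠ k in 𝓝[≠] 0, 3 * T < (1 + T * k ^ 2) * (tanh k / k) ^ 2 :=
    hlim.eventually (lt_mem_nhds (by linarith))
  filter_upwards [nhdsWithin_mono _ (fun k (hk : 0 < k) => hk.ne') hgt, self_mem_nhdsWithin]
    with k hk_gt (hk : 0 < k)
  have hsq : 0 < k ^ 2 := by positivity
  calc resonanceDefect T k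
      = k ^ 2 * (3 * T - (1 + T * k ^ 2) * (tanh k / k) ^ 2) := by
        unfold resonanceDefect
        field_simp
    _ < 0 := mul_neg_of_pos_of_neg hsq (by linarith)

theorem exists_pos_resonanceDefect_eq_zero {T : ℝ} (hT : 0 < T) (hT3 : T < 1 / 3) :
    ∃ k, 0 < k ∧ resonanceDefect T k = 0 := by
  obtain ⟨a, ha_neg, ha_pos⟩ :=
    ((eventually_resonanceDefect_neg hT3).and self_mem_nhdsWithin).exists
  have hb_pos : 0 < resonanceDefect T (1 / T) := resonanceDefect_pos <| by
    field_simp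
    linarith
  obtain ⟨k, hk_mem, hk_zero⟩ :=
    intermediate_value_uIcc (continuous_resonanceDefect T).continuousOn (mem_uIcc.2 (Or.inl ⟨ha_neg.le, hb_pos.le⟩))
  exact ⟨k, lt_of_lt_of_le (lt_min (mem_Ioi.1 ha_pos) (by positivity)) hk_mem.1, hk_zero⟩

theorem second_harmonic_resonance_exists : ∀ T : ℝ, 0 < T → T < 1 / 3 →
    ∃ k : ℝ, 0 < k ∧ cT T k = cT T (2 * k) := by
  intro T hT hT3
  obtain ⟨k, hk, hk_zero⟩ := exists_pos_resonanceDefect_eq_zero hT hT3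
  have hspeed := phaseSpeedSq_two_mul_sub T k
  rw [hk_zero, mul_zero, sub_eq_zero] at hspeed
  exact ⟨k, hk, congrArg sqrt hspeed.symm⟩
end
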